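/- Let V(t,x,y) = μ(x−y)² exp(∫_t^T 2r(h)dh) − y exp(∫_t^T r(h)dh) − (1/(4μ))∫_t^T β(h)dh. For every t ∈ [0,T] and x,y ∈ ℝ, the vector π*(t) := (1/(2μ)) exp(−∫_t^T r(h)dh) (σ(t)σ(t)ᵀ)⁻¹ γ(t)ᵀ is the unique minimizer over π ∈ ℝⁿ of the Hamiltonian π ↦ ∂_x V(t,x,y)·(r(t)x + γ(t)⋅π) + ∂_y V(t,x,y)·(r(t)y + γ(t)⋅π) + (1/2)·∂²_{xx}V(t,x,y)·(π ⋅ (σ(t)σ(t)ᵀ)π), and the minimum value equals ∂_x V(t,x,y)·r(t)x + ∂_y V(t,x,y)·r(t)y − β(t)/(4μ). -/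

import Mathlib

open Matrix

/-! Since `∂_x V + ∂_y V = -e^{∫_t^T r}` and `∂²_{xx} V = 2μ e^{2∫_t^T r} > 0`, the Hamiltonian is a
quadratic `c - b ⬝ᵥ π + (a/2) π ⬝ᵥ A π` in `π` with `A = σσᵀ` positive definite. Completing the
square around `a⁻¹ A⁻¹ b` exhibits it as the unique minimizer, with minimum `c - b ⬝ᵥ A⁻¹ b / (2a)`. -/

section Quadratic

variable {ι : Type*} [Fintype ι]

theorem Matrix.IsSymm.dotProduct_mulVec_comm {R : Type*} [CommSemiring R] {A : Matrix ι ι R}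
    (hA : A.IsSymm) (v w : ι → R) : v ⬝ᵥ A *ᵥ w = w ⬝ᵥ A *ᵥ v := by
  rw [dotProduct_mulVec, ← mulVec_transpose, hA.eq, dotProduct_comm]

variable [DecidableEq ι] {A : Matrix ι ι ℝ}

theorem Matrix.IsSymm.quadratic_eq_add_dotProduct_mulVec_sub (hA : A.IsSymm)
    (hdet : IsUnit A.det) {a : ℝ} (ha : a ≠ 0) (c : ℝ) (b π : ι → ℝ) :
    c - b ⬝ᵥ π + a / 2 * (π ⬝ᵥ A *ᵥ π)
      = c - b ⬝ᵥ A⁻¹ *ᵥ b / (2 * a)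
        + a / 2 * ((π - a⁻¹ • A⁻¹ *ᵥ b) ⬝ᵥ A *ᵥ (π - a⁻¹ • A⁻¹ *ᵥ b)) := by
  have hAw : A *ᵥ (A⁻¹ *ᵥ b) = b := by
    rw [mulVec_mulVec, mul_nonsing_inv A hdet, one_mulVec]
  have hcross : π ⬝ᵥ A *ᵥ (A⁻¹ *ᵥ b) = b ⬝ᵥ π := by rw [hAw, dotProduct_comm]
  have hcross' : (A⁻¹ *ᵥ b) ⬝ᵥ A *ᵥ π = b ⬝ᵥ π := by rw [hA.dotProduct_mulVec_comm, hcross]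
  have hdiag : (A⁻¹ *ᵥ b) ⬝ᵥ A *ᵥ (A⁻¹ *ᵥ b) = b ⬝ᵥ A⁻¹ *ᵥ b := by
    rw [hAw, dotProduct_comm]
  simp only [mulVec_sub, mulVec_smul, dotProduct_sub, sub_dotProduct,
    dotProduct_smul, smul_dotProduct, smul_eq_mul, hcross, hcross', hdiag]
  field_simp
  ring

theorem Matrix.PosDef.isUniqueMin_quadratic (hA : A.PosDef) {a : ℝ} (ha : 0 < a) (c : ℝ)
    (b : ι → ℝ) (Q : (ι → ℝ) → ℝ) (hQ : ∀ π, Q π = c - b ⬝ᵥ π + a / 2 * (π ⬝ᵥ A *ᵥ π)) :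
    (∀ π, Q (a⁻¹ • A⁻¹ *ᵥ b) ≤ Q π) ∧
    (∀ π, Q π = Q (a⁻¹ • A⁻¹ *ᵥ b) → π = a⁻¹ • A⁻¹ *ᵥ b) ∧
    Q (a⁻¹ • A⁻¹ *ᵥ b) = c - b ⬝ᵥ A⁻¹ *ᵥ b / (2 * a) := by
  set π₀ := a⁻¹ • A⁻¹ *ᵥ b
  have hsymm : A.IsSymm := isHermitian_iff_isSymm.mp hA.isHermitian
  have hQ' : ∀ π, Q π = c - b ⬝ᵥ A⁻¹ *ᵥ b / (2 * a) + a / 2 * ((π - π₀) ⬝ᵥ A *ᵥ (π - π₀)) :=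
    fun π => (hQ π).trans
      (hsymm.quadratic_eq_add_dotProduct_mulVec_sub ((isUnit_iff_isUnit_det A).mp hA.isUnit)
        ha.ne' c b π)
  have hmin : Q π₀ = c - b ⬝ᵥ A⁻¹ *ᵥ b / (2 * a) := by simp [hQ']
  have hpos : ∀ π, π ≠ π₀ → 0 < (π - π₀) ⬝ᵥ A *ᵥ (π - π₀) := fun π hπ => by
    simpa using hA.dotProduct_mulVec_pos (sub_ne_zero.mpr hπ)
  refine ⟨fun π => ?_, fun π hπ => ?_, hmin⟩
  · rcases eq_or_ne π π₀ with rfl | hne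
    · rfl
    · rw [hmin, hQ']
      nlinarith [hpos π hne]
  · by_contra hne
    rw [hmin, hQ'] at hπ
    nlinarith [hpos π hne]

end Quadratic

section ValueFunction

variable (μ a b k : ℝ)

theorem hasDerivAt_mul_sub_sq_left (x y : ℝ) :
    HasDerivAt (fun x' => μ * (x' - y) ^ 2 * a - y * b - k) (2 * μ * (x - y) * a) x := by
  have := ((((hasDerivAt_id' x).sub_const y).pow 2).const_mul μ).mul_const a
  exact ((this.sub_const (y * b)).sub_const k).congr_deriv (by ring)

theorem deriv_deriv_mul_sub_sq_left (x y : ℝ) :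
    deriv (deriv fun x' => μ * (x' - y) ^ 2 * a - y * b - k) x = 2 * μ * a := by
  have hderiv : deriv (fun x' => μ * (x' - y) ^ 2 * a - y * b - k)
      = fun x' => 2 * μ * (x' - y) * a :=
    funext fun x' => (hasDerivAt_mul_sub_sq_left μ a b k x' y).deriv
  rw [hderiv]
  exact ((((hasDerivAt_id' x).sub_const y).const_mul (2 * μ)).mul_const a).deriv.trans (by ring)

theorem hasDerivAt_mul_sub_sq_right (x y : ℝ) :
    HasDerivAt (fun y' => μ * (x - y') ^ 2 * a - y' * b - k)
      (-(2 * μ * (x - y) * a) - b) y := by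
  have := ((((hasDerivAt_id' y).const_sub x).pow 2).const_mul μ).mul_const a
  exact ((this.sub ((hasDerivAt_id' y).mul_const b)).sub_const k).congr_deriv (by ring)

theorem deriv_add_deriv_mul_sub_sq (x y : ℝ) :
    deriv (fun x' => μ * (x' - y) ^ 2 * a - y * b - k) x
      + deriv (fun y' => μ * (x - y') ^ 2 * a - y' * b - k) y = -b := by
  rw [(hasDerivAt_mul_sub_sq_left μ a b k x y).deriv,
    (hasDerivAt_mul_sub_sq_right μ a b k x y).deriv]
  ring

end ValueFunction

theorem unique_minimizer_of_hamiltonian_general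
    (T : ℝ) (n d : ℕ)
    (r : ℝ → ℝ) (γ : ℝ → Fin n → ℝ) (σ : ℝ → Matrix (Fin n) (Fin d) ℝ)
    (hpd : ∀ t ∈ Set.Icc (0:ℝ) T, (σ t * (σ t)ᵀ).PosDef)
    (μ : ℝ) (hμ : 0 < μ)
    (β : ℝ → ℝ) (hβ : ∀ t, β t = γ t ⬝ᵥ (σ t * (σ t)ᵀ)⁻¹ *ᵥ γ t)
    (V : ℝ → ℝ → ℝ → ℝ)
    (hV : ∀ t x y, V t x y
        = μ * (x - y)^2 * Real.exp (∫ h in t..T, 2 * r h)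
          - y * Real.exp (∫ h in t..T, r h)
          - (1/(4*μ)) * ∫ h in t..T, β h)
    (t : ℝ) (ht : t ∈ Set.Icc (0:ℝ) T) (x y : ℝ)
    (H : (Fin n → ℝ) → ℝ)
    (hH : ∀ π : Fin n → ℝ, H π
        = deriv (fun x' => V t x' y) x * (r t * x + γ t ⬝ᵥ π)
          + deriv (fun y' => V t x y') y * (r t * y + γ t ⬝ᵥ π)
          + (1/2) * deriv (deriv (fun x' => V t x' y)) x
              * (π ⬝ᵥ (σ t * (σ t)ᵀ) *ᵥ π))
    (πstar : Fin n → ℝ)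
    (hπstar : πstar
        = ((1/(2*μ)) * Real.exp (-(∫ h in t..T, r h))) • ((σ t * (σ t)ᵀ)⁻¹ *ᵥ γ t)) :
    (∀ π : Fin n → ℝ, H πstar ≤ H π) ∧
    (∀ π : Fin n → ℝ, H π = H πstar → π = πstar) ∧
    H πstar = deriv (fun x' => V t x' y) x * (r t * x)
        + deriv (fun y' => V t x y') y * (r t * y) - β t / (4*μ) := by
  set E := Real.exp (∫ h in t..T, r h)
  set K := (1/(4*μ)) * ∫ h in t..T, β h
  have hE : 0 < E := Real.exp_pos _
  have hE2 : Real.exp (∫ h in t..T, 2 * r h) = E ^ 2 := by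
    rw [intervalIntegral.integral_const_mul, ← Real.exp_nat_mul]; norm_num
  have hVx : (fun x' => V t x' y) = fun x' => μ * (x' - y) ^ 2 * E ^ 2 - y * E - K :=
    funext fun x' => by rw [hV, hE2]
  have hVy : (fun y' => V t x y') = fun y' => μ * (x - y') ^ 2 * E ^ 2 - y' * E - K :=
    funext fun y' => by rw [hV, hE2]
  have hsum : deriv (fun x' => V t x' y) x + deriv (fun y' => V t x y') y = -E := by
    rw [hVx, hVy, deriv_add_deriv_mul_sub_sq]
  have hxx : deriv (deriv fun x' => V t x' y) x = 2 * μ * E ^ 2 := by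
    rw [hVx, deriv_deriv_mul_sub_sq_left]
  have hquad : ∀ π, H π = deriv (fun x' => V t x' y) x * (r t * x)
      + deriv (fun y' => V t x y') y * (r t * y) - (E • γ t) ⬝ᵥ π
      + 2 * μ * E ^ 2 / 2 * (π ⬝ᵥ (σ t * (σ t)ᵀ) *ᵥ π) := fun π => by
    rw [hH, hxx, smul_dotProduct, smul_eq_mul]
    linear_combination (γ t ⬝ᵥ π) * hsum
  have hminimizer : πstar = (2 * μ * E ^ 2)⁻¹ • (σ t * (σ t)ᵀ)⁻¹ *ᵥ (E • γ t) := by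
    rw [hπstar, mulVec_smul, smul_smul, Real.exp_neg]
    field_simp
    rfl
  have hvalue : (E • γ t) ⬝ᵥ (σ t * (σ t)ᵀ)⁻¹ *ᵥ (E • γ t) / (2 * (2 * μ * E ^ 2))
      = β t / (4 * μ) := by
    rw [mulVec_smul, dotProduct_smul, smul_dotProduct, hβ]
    field_simp
    ring
  rw [hminimizer, ← hvalue]
  exact (hpd t ht).isUniqueMin_quadratic (by positivity) _ _ H hquad

/-- the vector `π*(t) = (1/(2μ)) e^{−∫_t^T r} (σσᵀ)⁻¹γᵀ` is the unique
minimizer of the Hamiltonian built from the derivatives of the sections of `V`, and the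
minimum value equals `∂_x V · r t x + ∂_y V · r t y − β(t)/(4μ)`. -/
theorem unique_minimizer_of_hamiltonian
    (T : ℝ) (hT : 0 < T) (n d : ℕ) (hn : 1 ≤ n) (hd : 1 ≤ d)
    (r : ℝ → ℝ) (γ : ℝ → Fin n → ℝ) (σ : ℝ → Matrix (Fin n) (Fin d) ℝ)
    (hr : ContinuousOn r (Set.Icc 0 T)) (hγ : ContinuousOn γ (Set.Icc 0 T))
    (hσ : ContinuousOn σ (Set.Icc 0 T))
    (hpd : ∀ t ∈ Set.Icc (0:ℝ) T, (σ t * (σ t)ᵀ).PosDef)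
    (μ : ℝ) (hμ : 0 < μ)
    (β : ℝ → ℝ) (hβ : ∀ t, β t = γ t ⬝ᵥ (σ t * (σ t)ᵀ)⁻¹ *ᵥ γ t)
    (V : ℝ → ℝ → ℝ → ℝ)
    (hV : ∀ t x y, V t x y
        = μ * (x - y)^2 * Real.exp (∫ h in t..T, 2 * r h)
          - y * Real.exp (∫ h in t..T, r h)
          - (1/(4*μ)) * ∫ h in t..T, β h)
    (t : ℝ) (ht : t ∈ Set.Icc (0:ℝ) T) (x y : ℝ)
    (H : (Fin n → ℝ) → ℝ)
    (hH : ∀ π : Fin n → ℝ, H π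
        = deriv (fun x' => V t x' y) x * (r t * x + γ t ⬝ᵥ π)
          + deriv (fun y' => V t x y') y * (r t * y + γ t ⬝ᵥ π)
          + (1/2) * deriv (deriv (fun x' => V t x' y)) x
              * (π ⬝ᵥ (σ t * (σ t)ᵀ) *ᵥ π))
    (πstar : Fin n → ℝ)
    (hπstar : πstar
        = ((1/(2*μ)) * Real.exp (-(∫ h in t..T, r h))) • ((σ t * (σ t)ᵀ)⁻¹ *ᵥ γ t)) :
    (∀ π : Fin n → ℝ, H πstar ≤ H π) ∧
    (∀ π : Fin n → ℝ, H π = H πstar → π = πstar) ∧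
    H πstar = deriv (fun x' => V t x' y) x * (r t * x)
        + deriv (fun y' => V t x y') y * (r t * y) - β t / (4*μ) :=
  unique_minimizer_of_hamiltonian_general T n d r γ σ hpd μ hμ β hβ V hV t ht x y H hH πstar hπstar
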